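/- arXiv:2111.13322 — 3 statements merged into one kernel-verified Lean document; each statement's English description precedes it below -/
import Mathlib

section
/- (Sufficient-decrease inequality in the proof of Theorem 2.) Assume each f_i is convex, the δ-similarity condition holds, and 0 < η ≤ min(1/(8nL), 1/(8n²δ)). Fix any permutation π of {1,…,n} and any point w_s ∈ ℝ^d, and let w_{s+1} be the output of a SARAH epoch with step size η, permutation π, start point w_s and initial direction ∇P(w_s). Then P(w_{s+1}) ≤ P(w_s) − (η(n+1)/4)·‖∇P(w_s)‖². -/
/-!
Along an epoch, the SARAH direction `vⁱ` tracks `∇P(wⁱ)` up to an error that grows by at most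
`δ/2 · ‖wⁱ⁺¹ - wⁱ‖` per step (δ-similarity), while `∇P(wⁱ)` stays within `L ‖wⁱ - w_s‖` of
`∇P(w_s)`. For `η ≤ min(1/(8nL), 1/(8n²δ))` an induction keeps every `vⁱ` within
`3/8 ‖∇P(w_s)‖` of `∇P(w_s)`, so the total step `Σ vⁱ` is `(n+1) ∇P(w_s)` up to a relative
error `3/8`, and the descent lemma for the `L`-smooth `P` gives the decrease
`η(n+1)/4 · ‖∇P(w_s)‖²`.
-/

open scoped BigOperators RealInnerProductSpace

section Averages

variable {E F : Type*} [SeminormedAddCommGroup E] [SeminormedAddCommGroup F] [NormedSpace ℝ F]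

theorem norm_average_sub_average_le {n : ℕ} (hn : n ≠ 0) {G : Fin n → E → F} {L : ℝ}
    (hG : ∀ i x y, ‖G i x - G i y‖ ≤ L * ‖x - y‖) (x y : E) :
    ‖(1 / (n : ℝ)) • ∑ i, G i x - (1 / (n : ℝ)) • ∑ i, G i y‖ ≤ L * ‖x - y‖ := by
  rw [← smul_sub, ← Finset.sum_sub_distrib, norm_smul, Real.norm_of_nonneg (by positivity)]
  calc 1 / (n : ℝ) * ‖∑ i, (G i x - G i y)‖ ≤ 1 / (n : ℝ) * ∑ _i : Fin n, L * ‖x - y‖ := by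
        gcongr; exact norm_sum_le_of_le _ fun i _ => hG i x y
    _ = L * ‖x - y‖ := by
        rw [Finset.sum_const, Finset.card_univ, Fintype.card_fin, nsmul_eq_mul]
        field_simp

theorem norm_sum_sub_card_smul_le {ι : Type*} (s : Finset ι) {v : ι → F} {g : F} {r : ℝ}
    (hv : ∀ j ∈ s, ‖v j - g‖ ≤ r) : ‖∑ j ∈ s, v j - (s.card : ℝ) • g‖ ≤ s.card * r := by
  rw [Nat.cast_smul_eq_nsmul, ← Finset.sum_const, ← Finset.sum_sub_distrib]
  simpa using norm_sum_le_of_le s hv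

end Averages

section Smooth

variable {E : Type*} [NormedAddCommGroup E] [InnerProductSpace ℝ E] [CompleteSpace E]

theorem hasGradientAt_const_mul_sum {ι : Type*} (s : Finset ι) (c : ℝ) {f : ι → E → ℝ} {x : E}
    (hf : ∀ i ∈ s, DifferentiableAt ℝ (f i) x) :
    HasGradientAt (fun w => c * ∑ i ∈ s, f i w) (c • ∑ i ∈ s, gradient (f i) x) x := by
  rw [hasGradientAt_iff_hasFDerivAt, map_smul, map_sum]
  exact (HasFDerivAt.fun_sum fun i hi =>
    hasGradientAt_iff_hasFDerivAt.1 (hf i hi).hasGradientAt).const_mul c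

theorem le_add_inner_add_sq_of_lipschitz_gradient {φ : E → ℝ} {G : E → E} {L : ℝ}
    (hφ : ∀ x, HasGradientAt φ (G x) x) (hG : ∀ x y, ‖G x - G y‖ ≤ L * ‖x - y‖) (x y : E) :
    φ y ≤ φ x + ⟪G x, y - x⟫ + L / 2 * ‖y - x‖ ^ 2 := by
  set u := y - x
  -- the gap between `φ` and its upper model along the segment is antitone
  let gap : ℝ → ℝ := fun t => φ (x + t • u) - t * ⟪G x, u⟫ - L / 2 * t ^ 2 * ‖u‖ ^ 2
  let gap' : ℝ → ℝ := fun t => ⟪G (x + t • u), u⟫ - ⟪G x, u⟫ - L * t * ‖u‖ ^ 2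
  have hgap : ∀ t, HasDerivAt gap (gap' t) t := by
    intro t
    have hline : HasDerivAt (fun t : ℝ => x + t • u) u t := by
      simpa using ((hasDerivAt_id t).smul_const u).const_add x
    have hφt : HasDerivAt (fun t : ℝ => φ (x + t • u)) ⟪G (x + t • u), u⟫ t := by
      simpa [Function.comp_def] using (hφ (x + t • u)).hasFDerivAt.comp_hasDerivAt t hline
    exact ((hφt.sub ((hasDerivAt_id t).mul_const ⟪G x, u⟫)).sub
      (((hasDerivAt_pow 2 t).const_mul (L / 2)).mul_const (‖u‖ ^ 2))).congr_deriv
      (by simp only [gap']; ring)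
  have hgap'_nonpos : ∀ t, 0 ≤ t → gap' t ≤ 0 := by
    intro t ht
    have hinc : ⟪G (x + t • u) - G x, u⟫ ≤ L * (t * ‖u‖) * ‖u‖ := by
      refine (real_inner_le_norm _ _).trans ?_
      gcongr
      simpa [norm_smul, abs_of_nonneg ht] using hG (x + t • u) x
    rw [inner_sub_left] at hinc
    simp only [gap']
    linarith
  have hanti : AntitoneOn gap (Set.Icc 0 1) :=
    antitoneOn_of_hasDerivWithinAt_nonpos (convex_Icc 0 1)
      (fun t _ => (hgap t).continuousAt.continuousWithinAt)
      (fun t _ => (hgap t).hasDerivWithinAt)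
      (fun t ht => hgap'_nonpos t (interior_subset ht).1)
  have := hanti (by simp) (by simp) zero_le_one
  simp only [gap, u, zero_smul, one_smul, add_zero, add_sub_cancel, zero_mul, sub_zero,
    one_mul, one_pow, ne_eq, OfNat.ofNat_ne_zero, not_false_eq_true, zero_pow, mul_zero] at this
  linarith

theorem apply_sub_smul_le_of_norm_sub_smul_gradient_le {φ : E → ℝ} {G : E → E} {L η m : ℝ}
    (hφ : ∀ x, HasGradientAt φ (G x) x) (hG : ∀ x y, ‖G x - G y‖ ≤ L * ‖x - y‖)
    (hL : 0 ≤ L) (hη : 0 ≤ η) (hm : 0 ≤ m) (hstep : L * η * m ≤ 1 / 4) {x S : E}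
    (hS : ‖S - m • G x‖ ≤ 3 / 8 * m * ‖G x‖) :
    φ (x - η • S) ≤ φ x - η * m / 4 * ‖G x‖ ^ 2 := by
  set g := G x
  have hdesc := le_add_inner_add_sq_of_lipschitz_gradient hφ hG x (x - η • S)
  rw [sub_sub_cancel_left, inner_neg_right, real_inner_smul_right, norm_neg, norm_smul,
    Real.norm_of_nonneg hη] at hdesc
  have hinner : 5 / 8 * m * ‖g‖ ^ 2 ≤ ⟪g, S⟫ := by
    have hsplit : ⟪g, S⟫ = m * ‖g‖ ^ 2 + ⟪g, S - m • g⟫ := by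
      rw [inner_sub_right, real_inner_smul_right, real_inner_self_eq_norm_sq]; ring
    have hcross : -(‖g‖ * (3 / 8 * m * ‖g‖)) ≤ ⟪g, S - m • g⟫ :=
      (neg_le_neg (mul_le_mul_of_nonneg_left hS (norm_nonneg g))).trans
        (neg_le_of_abs_le (abs_real_inner_le_norm _ _))
    linarith
  have hnorm : ‖S‖ ≤ 11 / 8 * m * ‖g‖ := by
    have := norm_le_norm_add_norm_sub' S (m • g)
    rw [norm_smul, Real.norm_of_nonneg hm] at this
    linarith
  have hquad : L / 2 * (η * ‖S‖) ^ 2 ≤ 3 / 8 * (η * m * ‖g‖ ^ 2) := by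
    have hsq : ‖S‖ ^ 2 ≤ (11 / 8 * m * ‖g‖) ^ 2 := pow_le_pow_left₀ (norm_nonneg S) hnorm 2
    calc L / 2 * (η * ‖S‖) ^ 2 ≤ L / 2 * η ^ 2 * (11 / 8 * m * ‖g‖) ^ 2 := by
          rw [mul_pow, ← mul_assoc]; gcongr
      _ = 121 / 128 * (L * η * m) * (η * m * ‖g‖ ^ 2) := by ring
      _ ≤ 121 / 128 * (1 / 4) * (η * m * ‖g‖ ^ 2) := by gcongr
      _ ≤ 3 / 8 * (η * m * ‖g‖ ^ 2) := by gcongr; norm_num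
  linarith [mul_le_mul_of_nonneg_left hinner hη]

end Smooth

section Sarah

variable {ι E : Type*} {n : ℕ}

structure IsSarahEpoch [AddCommGroup E] [Module ℝ E] (G : ι → E → E) (σ : Fin n → ι) (η : ℝ)
    (W V : ℕ → E) : Prop where
  w_succ : ∀ i : Fin n, W ((i : ℕ) + 1) = W i - η • V i
  v_succ : ∀ i : Fin n, V ((i : ℕ) + 1) = V i + G (σ i) (W ((i : ℕ) + 1)) - G (σ i) (W i)

namespace IsSarahEpoch

section Algebra

variable [AddCommGroup E] [Module ℝ E] {G : ι → E → E} {σ : Fin n → ι} {η : ℝ} {W V : ℕ → E}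

theorem eq_sub_smul_sum (h : IsSarahEpoch G σ η W V) :
    ∀ i ≤ n, W i = W 0 - η • ∑ j ∈ Finset.range i, V j := by
  intro i
  induction i with
  | zero => simp
  | succ i ih =>
    intro hi
    have hw : W (i + 1) = W i - η • V i := h.w_succ ⟨i, hi⟩
    rw [hw, ih (by omega), Finset.sum_range_succ, smul_add]
    abel

theorem sub_smul_eq_sub_smul_sum (h : IsSarahEpoch G σ η W V) :
    W n - η • V n = W 0 - η • ∑ j ∈ Finset.range (n + 1), V j := by
  rw [h.eq_sub_smul_sum n le_rfl, Finset.sum_range_succ, smul_add]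
  abel

end Algebra

variable [SeminormedAddCommGroup E] [NormedSpace ℝ E] {G : ι → E → E} {Gbar : E → E}
  {σ : Fin n → ι} {η L δ : ℝ} {W V : ℕ → E}

theorem norm_sub_initial_le (h : IsSarahEpoch G σ η W V) (hV0 : V 0 = Gbar (W 0))
    (hGbar : ∀ x y, ‖Gbar x - Gbar y‖ ≤ L * ‖x - y‖)
    (hsim : ∀ k x y, ‖(G k x - Gbar x) - (G k y - Gbar y)‖ ≤ δ / 2 * ‖x - y‖)
    (hη : 0 ≤ η) (hL : 0 ≤ L) (hδ : 0 ≤ δ) (hLη : L * η * n ≤ 1 / 8) (hδη : δ * η * n ≤ 1 / 8) :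
    ∀ i ≤ n, ‖V i - V 0‖ ≤ 3 / 8 * ‖V 0‖ := by
  set A := ‖V 0‖
  have hA : 0 ≤ A := norm_nonneg _
  have hclose : ∀ i ≤ n, ‖W i - W 0‖ ≤ 2 * η * i * A → ‖V i - Gbar (W i)‖ ≤ δ * η * i * A →
      ‖V i - V 0‖ ≤ 3 / 8 * A := by
    intro i hi hW hV
    have hi : (i : ℝ) ≤ n := by exact_mod_cast hi
    have hδi : δ * η * i ≤ 1 / 8 := le_trans (by gcongr) hδη
    have hLi : L * η * i ≤ 1 / 8 := le_trans (by gcongr) hLη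
    calc ‖V i - V 0‖ ≤ ‖V i - Gbar (W i)‖ + ‖Gbar (W i) - Gbar (W 0)‖ := by
          rw [hV0]; exact norm_sub_le_norm_sub_add_norm_sub _ _ _
      _ ≤ δ * η * i * A + L * (2 * η * i * A) := add_le_add hV ((hGbar _ _).trans (by gcongr))
      _ ≤ 3 / 8 * A := by
          linarith [mul_le_mul_of_nonneg_right hδi hA, mul_le_mul_of_nonneg_right hLi hA]
  have hdrift : ∀ i ≤ n, ‖W i - W 0‖ ≤ 2 * η * i * A ∧ ‖V i - Gbar (W i)‖ ≤ δ * η * i * A := by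
    intro i
    induction i with
    | zero => simp [hV0]
    | succ i ih =>
      intro hi
      obtain ⟨hW, hV⟩ := ih (by omega)
      have hw : W (i + 1) = W i - η • V i := h.w_succ ⟨i, hi⟩
      have hv : V (i + 1) = V i + G (σ ⟨i, hi⟩) (W (i + 1)) - G (σ ⟨i, hi⟩) (W i) :=
        h.v_succ ⟨i, hi⟩
      have hstep : ‖W (i + 1) - W i‖ ≤ 2 * η * A := by
        have hVi := norm_le_norm_add_norm_sub' (V i) (V 0)
        have := hclose i (by omega) hW hV
        rw [hw, sub_sub_cancel_left, norm_neg, norm_smul, Real.norm_of_nonneg hη]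
        linarith [mul_le_mul_of_nonneg_left (show ‖V i‖ ≤ 2 * A by linarith) hη]
      push_cast
      constructor
      · calc ‖W (i + 1) - W 0‖ ≤ ‖W (i + 1) - W i‖ + ‖W i - W 0‖ :=
              norm_sub_le_norm_sub_add_norm_sub _ _ _
          _ ≤ 2 * η * A + 2 * η * i * A := add_le_add hstep hW
          _ = 2 * η * (i + 1) * A := by ring
      · have hsplit : V (i + 1) - Gbar (W (i + 1)) = (V i - Gbar (W i)) +
            ((G (σ ⟨i, hi⟩) (W (i + 1)) - Gbar (W (i + 1))) -
              (G (σ ⟨i, hi⟩) (W i) - Gbar (W i))) := by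
          rw [hv]; abel
        calc ‖V (i + 1) - Gbar (W (i + 1))‖ ≤ δ * η * i * A + δ / 2 * ‖W (i + 1) - W i‖ := by
              rw [hsplit]; exact (norm_add_le _ _).trans (add_le_add hV (hsim _ _ _))
          _ ≤ δ * η * i * A + δ / 2 * (2 * η * A) := by gcongr
          _ = δ * η * (i + 1) * A := by ring
  exact fun i hi => hclose i hi (hdrift i hi).1 (hdrift i hi).2

end IsSarahEpoch

end Sarah

theorem rr_sarah_sufficient_decrease_general
    {d n : ℕ} (hn : 1 ≤ n)
    (f : Fin n → EuclideanSpace ℝ (Fin d) → ℝ)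
    (P : EuclideanSpace ℝ (Fin d) → ℝ)
    (hP : ∀ w, P w = (1 / (n : ℝ)) * ∑ i, f i w)
    (L δ η : ℝ) (hL : 0 < L) (hδ : 0 < δ)
    (hdiff : ∀ i, Differentiable ℝ (f i))
    (hLip : ∀ i w₁ w₂, ‖gradient (f i) w₁ - gradient (f i) w₂‖ ≤ L * ‖w₁ - w₂‖)
    (hsim : ∀ i w₁ w₂,
      ‖(gradient (f i) w₁ - gradient P w₁) - (gradient (f i) w₂ - gradient P w₂)‖
        ≤ (δ / 2) * ‖w₁ - w₂‖)
    (hη0 : 0 < η)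
    (hη : η ≤ min (1 / (8 * n * L)) (1 / (8 * n ^ 2 * δ)))
    (π : Equiv.Perm (Fin n))
    (ws : EuclideanSpace ℝ (Fin d))
    -- one SARAH epoch: start point `ws`, initial direction `∇P(ws)`, permutation `π`
    (W V : ℕ → EuclideanSpace ℝ (Fin d))
    (hW0 : W 0 = ws) (hV0 : V 0 = gradient P ws)
    (hWrec : ∀ i : Fin n, W ((i : ℕ) + 1) = W i - η • V i)
    (hVrec : ∀ i : Fin n, V ((i : ℕ) + 1)
      = V i + gradient (f (π i)) (W ((i : ℕ) + 1)) - gradient (f (π i)) (W i))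
    (wnext : EuclideanSpace ℝ (Fin d)) (hwnext : wnext = W n - η • V n) :
    P wnext ≤ P ws - (η * ((n : ℝ) + 1) / 4) * ‖gradient P ws‖ ^ 2 := by
  subst hW0 hwnext
  have hn₀ : (1 : ℝ) ≤ n := by exact_mod_cast hn
  have hPgrad : ∀ x, HasGradientAt P ((1 / (n : ℝ)) • ∑ i, gradient (f i) x) x := fun x =>
    (hasGradientAt_const_mul_sum _ _ fun i _ => hdiff i x).congr_of_eventuallyEq
      (Filter.Eventually.of_forall hP)
  have hPLip : ∀ x y, ‖gradient P x - gradient P y‖ ≤ L * ‖x - y‖ := fun x y => by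
    rw [(hPgrad x).gradient, (hPgrad y).gradient]
    exact norm_average_sub_average_le (by omega) hLip x y
  have hLη : L * η * n ≤ 1 / 8 := by
    have := (le_div_iff₀ (by positivity)).1 (hη.trans (min_le_left _ _))
    linarith
  have hδη : δ * η * n ≤ 1 / 8 := by
    have := (le_div_iff₀ (by positivity)).1 (hη.trans (min_le_right _ _))
    nlinarith [mul_nonneg (mul_nonneg hδ.le hη0.le) (sub_nonneg.2 hn₀)]
  have hepoch : IsSarahEpoch (fun i => gradient (f i)) π η W V := ⟨hWrec, hVrec⟩
  have hclose := hepoch.norm_sub_initial_le hV0 hPLip hsim hη0.le hL.le hδ.le hLη hδη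
  rw [hepoch.sub_smul_eq_sub_smul_sum]
  refine apply_sub_smul_le_of_norm_sub_smul_gradient_le
    (fun x => (hPgrad x).differentiableAt.hasGradientAt) hPLip hL.le hη0.le (by positivity)
    (by nlinarith) ?_
  have := norm_sum_sub_card_smul_le (Finset.range (n + 1))
    fun j hj => hclose j (Finset.mem_range_succ_iff.1 hj)
  rw [hV0, Finset.card_range, Nat.cast_succ] at this
  linarith

/-- Sufficient-decrease inequality in the proof of Theorem 2. -/
theorem rr_sarah_sufficient_decrease
    {d n : ℕ} (hd : 1 ≤ d) (hn : 1 ≤ n)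
    (f : Fin n → EuclideanSpace ℝ (Fin d) → ℝ)
    (P : EuclideanSpace ℝ (Fin d) → ℝ)
    (hP : ∀ w, P w = (1 / (n : ℝ)) * ∑ i, f i w)
    (L δ η : ℝ) (hL : 0 < L) (hδ : 0 < δ)
    (hdiff : ∀ i, Differentiable ℝ (f i))
    (hconv : ∀ i, ConvexOn ℝ Set.univ (f i))
    (hLip : ∀ i w₁ w₂, ‖gradient (f i) w₁ - gradient (f i) w₂‖ ≤ L * ‖w₁ - w₂‖)
    (hsim : ∀ i w₁ w₂,
      ‖(gradient (f i) w₁ - gradient P w₁) - (gradient (f i) w₂ - gradient P w₂)‖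
        ≤ (δ / 2) * ‖w₁ - w₂‖)
    (hη0 : 0 < η)
    (hη : η ≤ min (1 / (8 * n * L)) (1 / (8 * n ^ 2 * δ)))
    (π : Equiv.Perm (Fin n))
    (ws : EuclideanSpace ℝ (Fin d))
    -- one SARAH epoch: start point `ws`, initial direction `∇P(ws)`, permutation `π`
    (W V : ℕ → EuclideanSpace ℝ (Fin d))
    (hW0 : W 0 = ws) (hV0 : V 0 = gradient P ws)
    (hWrec : ∀ i : Fin n, W ((i : ℕ) + 1) = W i - η • V i)
    (hVrec : ∀ i : Fin n, V ((i : ℕ) + 1)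
      = V i + gradient (f (π i)) (W ((i : ℕ) + 1)) - gradient (f (π i)) (W i))
    (wnext : EuclideanSpace ℝ (Fin d)) (hwnext : wnext = W n - η • V n) :
    P wnext ≤ P ws - (η * ((n : ℝ) + 1) / 4) * ‖gradient P ws‖ ^ 2 :=
  rr_sarah_sufficient_decrease_general hn f P hP L δ η hL hδ hdiff hLip hsim hη0 hη π ws W V hW0 hV0
    hWrec hVrec wnext hwnext
end

section
/- (Norm monotonicity of the SARAH directions, used via Lemma 3 of Nguyen et al.) Assume each f_i is convex and 0 < η ≤ 2/L. Fix a permutation π of {1,…,n}, a start point u ∈ ℝ^d and an initial direction g ∈ ℝ^d, and run a SARAH epoch: w⁰ = u, v⁰ = g, and for i = 1,…,n: wⁱ = w^{i−1} − η·v^{i−1}, vⁱ = v^{i−1} + ∇f_{π(i)}(wⁱ) − ∇f_{π(i)}(w^{i−1}). Then ‖vⁱ‖ ≤ ‖v^{i−1}‖ for every i ∈ {1,…,n}; in particular ‖vⁱ‖ ≤ ‖g‖ for all i. -/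
/-!
For a convex function with `L`-Lipschitz gradient, the gradient is co-coercive:
`‖∇f x - ∇f y‖² ≤ L ⟪∇f x - ∇f y, x - y⟫`, which follows from the first-order convexity bound
and the descent lemma evaluated at a gradient step. A SARAH update changes the direction by
`δ = ∇f(w - η v) - ∇f w`, and co-coercivity gives `‖δ‖² ≤ -η L ⟪v, δ⟫ ≤ -2 ⟪v, δ⟫` once
`η L ≤ 2`, so `‖v + δ‖² = ‖v‖² + 2 ⟪v, δ⟫ + ‖δ‖² ≤ ‖v‖²`.
-/

open Set
open scoped RealInnerProductSpace Gradient

variable {E : Type*} [NormedAddCommGroup E] [InnerProductSpace ℝ E] [CompleteSpace E]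
  {f : E → ℝ}

theorem hasDerivAt_comp_add_smul (hf : Differentiable ℝ f) (x v : E) (t : ℝ) :
    HasDerivAt (fun s : ℝ => f (x + s • v)) ⟪∇ f (x + t • v), v⟫ t := by
  have hline : HasDerivAt (fun s : ℝ => x + s • v) v t := by
    simpa using ((hasDerivAt_id t).smul_const v).const_add x
  exact ((hf _).hasGradientAt.hasFDerivAt.comp_hasDerivAt t hline).congr_deriv
    (by simp [gradient])

theorem ConvexOn.add_inner_gradient_le (hconv : ConvexOn ℝ univ f) (hf : Differentiable ℝ f)
    (x y : E) : f x + ⟪∇ f x, y - x⟫ ≤ f y := by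
  have hline : ConvexOn ℝ univ fun s : ℝ => f (x + s • (y - x)) := by
    simpa [Function.comp_def, AffineMap.lineMap_apply, add_comm] using
      hconv.comp_affineMap (AffineMap.lineMap x y)
  have hslope := hline.le_slope_of_hasDerivAt (mem_univ 0) (mem_univ 1) one_pos
    (hasDerivAt_comp_add_smul hf x (y - x) 0)
  simp only [slope_def_field, zero_smul, add_zero, one_smul, add_sub_cancel] at hslope
  linarith

theorem le_add_inner_gradient_add_sq (hf : Differentiable ℝ f) {L : ℝ}
    (hLip : ∀ a b, ‖∇ f a - ∇ f b‖ ≤ L * ‖a - b‖) (x y : E) :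
    f y ≤ f x + ⟪∇ f x, y - x⟫ + L / 2 * ‖y - x‖ ^ 2 := by
  set v := y - x
  set h : ℝ → ℝ := fun t => f (x + t • v) - t * ⟪∇ f x, v⟫ - L / 2 * ‖v‖ ^ 2 * t ^ 2
  have hderiv (t : ℝ) : HasDerivAt h (⟪∇ f (x + t • v) - ∇ f x, v⟫ - L * ‖v‖ ^ 2 * t) t := by
    have := ((hasDerivAt_comp_add_smul hf x v t).sub
      ((hasDerivAt_id t).mul_const ⟪∇ f x, v⟫)).sub
      ((hasDerivAt_pow 2 t).const_mul (L / 2 * ‖v‖ ^ 2))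
    exact this.congr_deriv (by push_cast; rw [inner_sub_left]; ring)
  have hanti : AntitoneOn h (Icc 0 1) := by
    refine antitoneOn_of_hasDerivWithinAt_nonpos (convex_Icc 0 1)
      (HasDerivAt.continuousOn fun t _ => hderiv t) (fun t _ => (hderiv t).hasDerivWithinAt) ?_
    intro t ht
    rw [interior_Icc] at ht
    calc ⟪∇ f (x + t • v) - ∇ f x, v⟫ - L * ‖v‖ ^ 2 * t
        ≤ ‖∇ f (x + t • v) - ∇ f x‖ * ‖v‖ - L * ‖v‖ ^ 2 * t := by
          gcongr; exact real_inner_le_norm _ _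
      _ ≤ L * (t * ‖v‖) * ‖v‖ - L * ‖v‖ ^ 2 * t := by
          gcongr
          simpa [norm_smul, abs_of_pos ht.1] using hLip (x + t • v) x
      _ = 0 := by ring
  have h01 := hanti (left_mem_Icc.2 zero_le_one) (right_mem_Icc.2 zero_le_one) zero_le_one
  simp only [h, zero_smul, add_zero, one_smul, v, add_sub_cancel] at h01
  linarith

theorem ConvexOn.add_inner_gradient_add_sq_le (hconv : ConvexOn ℝ univ f)
    (hf : Differentiable ℝ f) {L : ℝ} (hL : 0 < L)
    (hLip : ∀ a b, ‖∇ f a - ∇ f b‖ ≤ L * ‖a - b‖) (x y : E) :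
    f y + ⟪∇ f y, x - y⟫ + (2 * L)⁻¹ * ‖∇ f x - ∇ f y‖ ^ 2 ≤ f x := by
  set δ := ∇ f x - ∇ f y
  -- evaluate both bounds at the gradient step `x - L⁻¹ δ`
  have hlower := hconv.add_inner_gradient_le hf y (x - L⁻¹ • δ)
  have hupper := le_add_inner_gradient_add_sq hf hLip x (x - L⁻¹ • δ)
  have hδ : L⁻¹ * ⟪∇ f x, δ⟫ - L⁻¹ * ⟪∇ f y, δ⟫ = L⁻¹ * ‖δ‖ ^ 2 := by
    rw [← mul_sub, ← inner_sub_left, real_inner_self_eq_norm_sq]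
  rw [sub_sub_cancel_left, norm_neg, norm_smul, Real.norm_of_nonneg (by positivity),
    inner_neg_right, real_inner_smul_right] at hupper
  rw [sub_right_comm, inner_sub_right, real_inner_smul_right] at hlower
  have hcoef : L / 2 * (L⁻¹ * ‖δ‖) ^ 2 = (2 * L)⁻¹ * ‖δ‖ ^ 2 := by
    field_simp
  have hcoef' : L⁻¹ * ‖δ‖ ^ 2 - (2 * L)⁻¹ * ‖δ‖ ^ 2 = (2 * L)⁻¹ * ‖δ‖ ^ 2 := by
    field_simp; ring
  linarith

theorem ConvexOn.norm_sq_gradient_sub_le (hconv : ConvexOn ℝ univ f)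
    (hf : Differentiable ℝ f) {L : ℝ} (hL : 0 < L)
    (hLip : ∀ a b, ‖∇ f a - ∇ f b‖ ≤ L * ‖a - b‖) (x y : E) :
    ‖∇ f x - ∇ f y‖ ^ 2 ≤ L * ⟪∇ f x - ∇ f y, x - y⟫ := by
  have hxy := hconv.add_inner_gradient_add_sq_le hf hL hLip x y
  have hyx := hconv.add_inner_gradient_add_sq_le hf hL hLip y x
  rw [← norm_neg, neg_sub] at hyx
  have hinner : ⟪∇ f x - ∇ f y, x - y⟫ = -⟪∇ f y, x - y⟫ - ⟪∇ f x, y - x⟫ := by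
    rw [inner_sub_left, ← neg_sub x y, inner_neg_right]; ring
  have hsplit : ‖∇ f x - ∇ f y‖ ^ 2 = L * (2 * ((2 * L)⁻¹ * ‖∇ f x - ∇ f y‖ ^ 2)) := by
    field_simp
  rw [hsplit, hinner]
  gcongr
  linarith

theorem ConvexOn.norm_add_gradient_sub_gradient_le (hconv : ConvexOn ℝ univ f)
    (hf : Differentiable ℝ f) {L η : ℝ} (hL : 0 < L)
    (hLip : ∀ a b, ‖∇ f a - ∇ f b‖ ≤ L * ‖a - b‖) (hη0 : 0 < η) (hη : η ≤ 2 / L) (w v : E) :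
    ‖v + ∇ f (w - η • v) - ∇ f w‖ ≤ ‖v‖ := by
  have hcoco := hconv.norm_sq_gradient_sub_le hf hL hLip (w - η • v) w
  set δ := ∇ f (w - η • v) - ∇ f w
  rw [sub_sub_cancel_left, inner_neg_right, real_inner_smul_right, real_inner_comm] at hcoco
  have hηL : η * L ≤ 2 := (le_div_iff₀ hL).1 hη
  have hinner : ⟪v, δ⟫ ≤ 0 := by nlinarith [sq_nonneg ‖δ‖, mul_pos hη0 hL]
  have hdescent : 2 * ⟪v, δ⟫ + ‖δ‖ ^ 2 ≤ 0 := by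
    nlinarith [mul_le_mul_of_nonpos_right hηL hinner]
  rw [add_sub_assoc, ← sq_le_sq₀ (norm_nonneg _) (norm_nonneg _), norm_add_sq_real]
  linarith

theorem sarah_directions_norm_monotone_general
    {d n : ℕ}
    (f : Fin n → EuclideanSpace ℝ (Fin d) → ℝ)
    (L η : ℝ) (hL : 0 < L)
    (hdiff : ∀ i, Differentiable ℝ (f i))
    (hconv : ∀ i, ConvexOn ℝ Set.univ (f i))
    (hLip : ∀ i w₁ w₂, ‖gradient (f i) w₁ - gradient (f i) w₂‖ ≤ L * ‖w₁ - w₂‖)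
    (hη0 : 0 < η) (hη : η ≤ 2 / L)
    (π : Equiv.Perm (Fin n))
    (g : EuclideanSpace ℝ (Fin d))
    -- one SARAH epoch: start point `u`, initial direction `g`, permutation `π`
    (W V : ℕ → EuclideanSpace ℝ (Fin d))
    (hV0 : V 0 = g)
    (hWrec : ∀ i : Fin n, W ((i : ℕ) + 1) = W i - η • V i)
    (hVrec : ∀ i : Fin n, V ((i : ℕ) + 1)
      = V i + gradient (f (π i)) (W ((i : ℕ) + 1)) - gradient (f (π i)) (W i)) :
    (∀ i : Fin n, ‖V ((i : ℕ) + 1)‖ ≤ ‖V i‖) ∧ (∀ i : ℕ, i ≤ n → ‖V i‖ ≤ ‖g‖) := by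
  have step (i : Fin n) : ‖V ((i : ℕ) + 1)‖ ≤ ‖V i‖ := by
    rw [hVrec i, hWrec i]
    exact (hconv (π i)).norm_add_gradient_sub_gradient_le (hdiff _) hL (hLip _) hη0 hη _ _
  refine ⟨step, fun i hi => ?_⟩
  induction i with
  | zero => rw [hV0]
  | succ k ih => exact (step ⟨k, hi⟩).trans (ih (k.le_succ.trans hi))

/-- Norm monotonicity of the SARAH directions (Lemma 3 of Nguyen et al.). -/
theorem sarah_directions_norm_monotone
    {d n : ℕ} (hd : 1 ≤ d) (hn : 1 ≤ n)
    (f : Fin n → EuclideanSpace ℝ (Fin d) → ℝ)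
    (L η : ℝ) (hL : 0 < L)
    (hdiff : ∀ i, Differentiable ℝ (f i))
    (hconv : ∀ i, ConvexOn ℝ Set.univ (f i))
    (hLip : ∀ i w₁ w₂, ‖gradient (f i) w₁ - gradient (f i) w₂‖ ≤ L * ‖w₁ - w₂‖)
    (hη0 : 0 < η) (hη : η ≤ 2 / L)
    (π : Equiv.Perm (Fin n))
    (u g : EuclideanSpace ℝ (Fin d))
    -- one SARAH epoch: start point `u`, initial direction `g`, permutation `π`
    (W V : ℕ → EuclideanSpace ℝ (Fin d))
    (hW0 : W 0 = u) (hV0 : V 0 = g)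
    (hWrec : ∀ i : Fin n, W ((i : ℕ) + 1) = W i - η • V i)
    (hVrec : ∀ i : Fin n, V ((i : ℕ) + 1)
      = V i + gradient (f (π i)) (W ((i : ℕ) + 1)) - gradient (f (π i)) (W i)) :
    (∀ i : Fin n, ‖V ((i : ℕ) + 1)‖ ≤ ‖V i‖) ∧ (∀ i : ℕ, i ≤ n → ‖V i‖ ≤ ‖g‖) :=
  sarah_directions_norm_monotone_general f L η hL hdiff hconv hLip hη0 hη π g W V hV0 hWrec hVrec
end

section
/- (Penultimate inequality in the proof of Theorem 1.) Assume each f_i is convex, P is μ-strongly convex with minimizer w* and optimal value P*, the δ-similarity condition holds, and 0 < η ≤ min(1/(8nL), 1/(8n²δ)). Fix permutations π and π' of {1,…,n}, a point w_prev ∈ ℝ^d and a vector v_prev ∈ ℝ^d. Run one SARAH epoch with step size η, permutation π, start point w_prev and initial direction v_prev, producing inner iterates w¹_prev,…,wⁿ_prev and epoch output w_cur; set v_cur = (1/n)·Σ_{i=1}^{n} ∇f_{π(i)}(wⁱ_prev). Run a second SARAH epoch with step size η, permutation π', start point w_cur and initial direction v_cur, producing epoch output w_next. Then P(w_next) − P*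 + (η(n+1)/16)·‖v_cur‖² ≤ P(w_cur) − P* − (η(n+1)/4)·‖∇P(w_cur)‖² + (1 − η·μ·(n+1)/2)·(η(n+1)/16)·‖v_prev‖². -/
/-!
Let `η L n ≤ 1/8`. Along a SARAH epoch each direction changes by at most `η L` times its own
norm, so all directions stay within `‖v⁰‖/7` of `v⁰`, all iterates within `(8/7) η n ‖v⁰‖` of
each other, and δ-similarity keeps the estimation error `vⁱ - ∇P(wⁱ)` within `‖v⁰‖/14` of
`v⁰ - ∇P(w⁰)`. Plugging these perturbations into the descent lemma shows that each of the
`n + 1` steps of an epoch decreases `P` by `η/4 ‖∇P(w⁰)‖² + 15/49 η ‖v⁰‖²`, up to the initial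
error `η ‖v⁰ - ∇P(w⁰)‖²`. For the second epoch that error is `‖v_cur - ∇P(w_cur)‖`, and since
every point of the first epoch lies within `(8/7) η n ‖v_prev‖` of `w_cur`, it is at most
`‖v_prev‖/7`. Finally `1 - η μ (n + 1)/2 ≥ 7/8`, because strong convexity and the descent lemma
force `μ ≤ L`.
-/

open scoped RealInnerProductSpace
open Finset

variable {E : Type*} [NormedAddCommGroup E] [InnerProductSpace ℝ E]
  {F : Type*} [SeminormedAddCommGroup F]

theorem norm_sub_le_of_norm_succ_sub_le_mul {V : ℕ → F} {c : ℝ} {n : ℕ} (hc : 0 ≤ c)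
    (hcn : c * n ≤ 1 / 8) (hV : ∀ i < n, ‖V (i + 1) - V i‖ ≤ c * ‖V i‖) {i : ℕ} (hi : i ≤ n) :
    ‖V i - V 0‖ ≤ ‖V 0‖ / 7 := by
  -- the stronger bound `8/7 * c * i * ‖V 0‖` is what propagates through the induction
  suffices h : ∀ i ≤ n, ‖V i - V 0‖ ≤ 8 / 7 * c * i * ‖V 0‖ by
    have hci : c * i ≤ 1 / 8 := (mul_le_mul_of_nonneg_left (by exact_mod_cast hi) hc).trans hcn
    nlinarith [h i hi, norm_nonneg (V 0)]
  intro i hi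
  induction i with
  | zero => simp
  | succ i ih =>
    have ih := ih (by omega)
    have hci : c * i ≤ 1 / 8 :=
      (mul_le_mul_of_nonneg_left (by exact_mod_cast (by omega : i ≤ n)) hc).trans hcn
    have hstep := hV i (by omega)
    have hVi : ‖V i‖ ≤ ‖V 0‖ + ‖V i - V 0‖ := norm_le_insert' _ _
    calc ‖V (i + 1) - V 0‖ ≤ ‖V (i + 1) - V i‖ + ‖V i - V 0‖ :=
          norm_sub_le_norm_sub_add_norm_sub _ _ _
      _ ≤ 8 / 7 * c * (i + 1 : ℕ) * ‖V 0‖ := by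
        push_cast
        nlinarith [mul_le_mul_of_nonneg_left hVi hc, mul_le_mul_of_nonneg_left ih hc,
          mul_le_mul_of_nonneg_right hci (mul_nonneg hc (norm_nonneg (V 0)))]

variable [NormedSpace ℝ F]

theorem norm_one_div_smul_sum_le {n : ℕ} (hn : 1 ≤ n) (x : Fin n → F) {B : ℝ}
    (hx : ∀ i, ‖x i‖ ≤ B) :
    ‖(1 / (n : ℝ)) • ∑ i, x i‖ ≤ B := by
  have hn₀ : (0 : ℝ) < n := by exact_mod_cast hn
  calc ‖(1 / (n : ℝ)) • ∑ i, x i‖ ≤ 1 / n * ∑ _i : Fin n, B := by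
        rw [norm_smul, Real.norm_of_nonneg (by positivity)]
        gcongr
        exact (norm_sum_le _ _).trans (sum_le_sum fun i _ => hx i)
    _ = B := by simp [field]

section Smooth

variable [CompleteSpace E] {φ : E → ℝ} {L : ℝ}

theorem quadratic_upper_bound_of_lipschitz_gradient (hφ : Differentiable ℝ φ)
    (hL : ∀ a b, ‖gradient φ a - gradient φ b‖ ≤ L * ‖a - b‖) (x y : E) :
    φ y ≤ φ x + ⟪gradient φ x, y - x⟫ + L / 2 * ‖y - x‖ ^ 2 := by
  set u := y - x
  let ψ : ℝ → ℝ := fun t => φ (x + t • u) - L / 2 * ‖u‖ ^ 2 * t ^ 2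
  have hψ : ∀ t, HasDerivAt ψ (⟪gradient φ (x + t • u), u⟫ - L * ‖u‖ ^ 2 * t) t := by
    intro t
    have hline : HasDerivAt (fun s : ℝ => x + s • u) u t := by
      simpa using ((hasDerivAt_id t).smul_const u).const_add x
    have hcomp := (hφ _).hasGradientAt.hasFDerivAt.comp_hasDerivAt t hline
    rw [InnerProductSpace.toDual_apply_apply] at hcomp
    have hsq : HasDerivAt (fun s : ℝ => L / 2 * ‖u‖ ^ 2 * s ^ 2) (L * ‖u‖ ^ 2 * t) t :=
      ((hasDerivAt_pow 2 t).const_mul _).congr_deriv (by push_cast; ring)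
    exact hcomp.sub hsq
  obtain ⟨t, ⟨ht0, -⟩, hslope⟩ := exists_hasDerivAt_eq_slope ψ _ zero_lt_one
    (fun t _ => (hψ t).continuousAt.continuousWithinAt) fun t _ => hψ t
  have hinner : ⟪gradient φ (x + t • u) - gradient φ x, u⟫ ≤ L * ‖u‖ ^ 2 * t :=
    calc _ ≤ ‖gradient φ (x + t • u) - gradient φ x‖ * ‖u‖ := real_inner_le_norm _ _
      _ ≤ L * ‖x + t • u - x‖ * ‖u‖ := by gcongr; exact hL _ _
      _ = L * ‖u‖ ^ 2 * t := by
        rw [add_sub_cancel_left, norm_smul, Real.norm_of_nonneg ht0.le]; ring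
  have hψ1 : ψ 1 = φ y - L / 2 * ‖u‖ ^ 2 := by simp [ψ, u]
  have hψ0 : ψ 0 = φ x := by simp [ψ]
  rw [hψ1, hψ0, sub_zero, div_one] at hslope
  rw [inner_sub_left] at hinner
  linarith

theorem StrongConvexOn.mul_sq_norm_le_of_lipschitz_gradient {μ : ℝ}
    (hsc : StrongConvexOn Set.univ μ φ) (hφ : Differentiable ℝ φ)
    (hL : ∀ a b, ‖gradient φ a - gradient φ b‖ ≤ L * ‖a - b‖) (v : E) :
    μ * ‖v‖ ^ 2 ≤ L * ‖v‖ ^ 2 := by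
  have hmid := hsc.2 (Set.mem_univ v) (Set.mem_univ (-v))
    (by norm_num : (0 : ℝ) ≤ 1 / 2) (by norm_num : (0 : ℝ) ≤ 1 / 2) (by norm_num)
  have hup := quadratic_upper_bound_of_lipschitz_gradient hφ hL 0 v
  have hdown := quadratic_upper_bound_of_lipschitz_gradient hφ hL 0 (-v)
  rw [smul_neg, add_neg_cancel, sub_neg_eq_add, ← two_smul ℝ v, norm_smul] at hmid
  simp only [sub_zero, inner_neg_right, norm_neg, smul_eq_mul, Real.norm_two] at hmid hup hdown
  nlinarith

end Smooth

section Average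

variable [CompleteSpace E] {n : ℕ} {f : Fin n → E → ℝ} {P : E → ℝ}

theorem hasGradientAt_of_eq_average (hP : ∀ w, P w = (1 / (n : ℝ)) * ∑ i, f i w)
    (hf : ∀ i, Differentiable ℝ (f i)) (w : E) :
    HasGradientAt P ((1 / (n : ℝ)) • ∑ i, gradient (f i) w) w := by
  have hsum : HasFDerivAt (fun w => ∑ i, f i w)
      (∑ i, InnerProductSpace.toDual ℝ E (gradient (f i) w)) w :=
    HasFDerivAt.fun_sum fun i _ => (hf i w).hasGradientAt.hasFDerivAt
  rw [funext hP]
  simpa [map_smul, map_sum, gradient] using (hsum.const_mul (1 / (n : ℝ))).hasGradientAt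

theorem lipschitz_gradient_of_eq_average (hn : 1 ≤ n)
    (hP : ∀ w, P w = (1 / (n : ℝ)) * ∑ i, f i w) (hf : ∀ i, Differentiable ℝ (f i))
    {L : ℝ} (hL : ∀ i a b, ‖gradient (f i) a - gradient (f i) b‖ ≤ L * ‖a - b‖) (a b : E) :
    ‖gradient P a - gradient P b‖ ≤ L * ‖a - b‖ := by
  rw [(hasGradientAt_of_eq_average hP hf a).gradient,
    (hasGradientAt_of_eq_average hP hf b).gradient, ← smul_sub, ← sum_sub_distrib]
  exact norm_one_div_smul_sum_le hn _ fun i => hL i a b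

end Average

def IsSarahEpoch_s15 {n : ℕ} (G : Fin n → F → F) (η : ℝ) (π : Equiv.Perm (Fin n))
    (W V : ℕ → F) : Prop :=
  ∀ i : Fin n, W (i + 1) = W i - η • V i ∧
    V (i + 1) = V i + G (π i) (W (i + 1)) - G (π i) (W i)

namespace IsSarahEpoch_s15

variable {n : ℕ} {G : Fin n → F → F} {η L δ B : ℝ} {π : Equiv.Perm (Fin n)} {W V : ℕ → F}

theorem iterate_succ (h : IsSarahEpoch_s15 G η π W V) {i : ℕ} (hi : i < n) :
    W (i + 1) = W i - η • V i :=
  (h ⟨i, hi⟩).1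

theorem direction_succ_sub (h : IsSarahEpoch_s15 G η π W V) {i : ℕ} (hi : i < n) :
    V (i + 1) - V i = G (π ⟨i, hi⟩) (W (i + 1)) - G (π ⟨i, hi⟩) (W i) := by
  rw [(h ⟨i, hi⟩).2]
  abel

theorem norm_iterate_succ_sub (h : IsSarahEpoch_s15 G η π W V) (hη : 0 ≤ η) {i : ℕ}
    (hi : i < n) : ‖W (i + 1) - W i‖ = η * ‖V i‖ := by
  rw [h.iterate_succ hi, sub_sub_cancel_left, norm_neg, norm_smul, Real.norm_of_nonneg hη]

theorem norm_direction_sub_le (h : IsSarahEpoch_s15 G η π W V)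
    (hG : ∀ j a b, ‖G j a - G j b‖ ≤ L * ‖a - b‖) (hη : 0 ≤ η) (hL : 0 ≤ L)
    (hηL : η * L * n ≤ 1 / 8) {i : ℕ} (hi : i ≤ n) : ‖V i - V 0‖ ≤ ‖V 0‖ / 7 := by
  refine norm_sub_le_of_norm_succ_sub_le_mul (mul_nonneg hη hL) hηL (fun i hi => ?_) hi
  rw [h.direction_succ_sub hi, mul_assoc, mul_left_comm, ← h.norm_iterate_succ_sub hη hi]
  exact hG _ _ _

theorem norm_direction_le (h : IsSarahEpoch_s15 G η π W V)
    (hG : ∀ j a b, ‖G j a - G j b‖ ≤ L * ‖a - b‖) (hη : 0 ≤ η) (hL : 0 ≤ L)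
    (hηL : η * L * n ≤ 1 / 8) {i : ℕ} (hi : i ≤ n) : ‖V i‖ ≤ 8 / 7 * ‖V 0‖ := by
  linarith [norm_le_insert' (V i) (V 0), h.norm_direction_sub_le hG hη hL hηL hi]

theorem le_norm_direction (h : IsSarahEpoch_s15 G η π W V)
    (hG : ∀ j a b, ‖G j a - G j b‖ ≤ L * ‖a - b‖) (hη : 0 ≤ η) (hL : 0 ≤ L)
    (hηL : η * L * n ≤ 1 / 8) {i : ℕ} (hi : i ≤ n) : 6 / 7 * ‖V 0‖ ≤ ‖V i‖ := by
  linarith [norm_le_insert' (V 0) (V i), norm_sub_rev (V 0) (V i),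
    h.norm_direction_sub_le hG hη hL hηL hi]

theorem norm_iterate_sub_le (h : IsSarahEpoch_s15 G η π W V) (hη : 0 ≤ η)
    (hB : ∀ i < n, ‖V i‖ ≤ B) {j k : ℕ} (hjk : j ≤ k) (hk : k ≤ n) :
    ‖W k - W j‖ ≤ (k - j) * (η * B) := by
  rw [← dist_eq_norm, dist_comm]
  refine (dist_le_Ico_sum_of_dist_le (d := fun _ => η * B) hjk fun {i} _ hi => ?_).trans_eq ?_
  · rw [dist_comm, dist_eq_norm, h.norm_iterate_succ_sub hη (by omega)]
    exact mul_le_mul_of_nonneg_left (hB i (by omega)) hη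
  · rw [sum_const, Nat.card_Ico, nsmul_eq_mul, Nat.cast_sub hjk]

theorem norm_iterate_sub_output_le (h : IsSarahEpoch_s15 G η π W V) (hη : 0 ≤ η)
    (hB : ∀ i ≤ n, ‖V i‖ ≤ B) {i : ℕ} (hi : i < n) :
    ‖W (i + 1) - (W n - η • V n)‖ ≤ n * (η * B) := by
  have hmid := h.norm_iterate_sub_le hη (fun j hj => hB j hj.le) hi le_rfl
  have hlast : ‖W n - (W n - η • V n)‖ ≤ η * B := by
    rw [sub_sub_cancel, norm_smul, Real.norm_of_nonneg hη]
    exact mul_le_mul_of_nonneg_left (hB n le_rfl) hη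
  have hηB : 0 ≤ η * B := (norm_nonneg _).trans hlast
  calc ‖W (i + 1) - (W n - η • V n)‖
      ≤ ‖W n - W (i + 1)‖ + ‖W n - (W n - η • V n)‖ := by
        rw [norm_sub_rev (W n)]; exact norm_sub_le_norm_sub_add_norm_sub _ _ _
    _ ≤ (n - (i + 1 : ℕ)) * (η * B) + η * B := add_le_add hmid hlast
    _ ≤ n * (η * B) := by push_cast; nlinarith

theorem norm_error_sub_le (h : IsSarahEpoch_s15 G η π W V) (g : F → F)
    (hsim : ∀ j a b, ‖(G j a - g a) - (G j b - g b)‖ ≤ δ / 2 * ‖a - b‖) (hη : 0 ≤ η)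
    (hδ : 0 ≤ δ) (hB : ∀ i < n, ‖V i‖ ≤ B) {i : ℕ} (hi : i ≤ n) :
    ‖(V i - g (W i)) - (V 0 - g (W 0))‖ ≤ i * (δ / 2 * (η * B)) := by
  rw [← dist_eq_norm, dist_comm]
  refine (dist_le_range_sum_of_dist_le (f := fun k => V k - g (W k))
    (d := fun _ => δ / 2 * (η * B)) i
    fun {k} hk => ?_).trans_eq (by rw [sum_const, card_range, nsmul_eq_mul])
  have hstep : (V (k + 1) - g (W (k + 1))) - (V k - g (W k))
      = (G (π ⟨k, by omega⟩) (W (k + 1)) - g (W (k + 1)))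
        - (G (π ⟨k, by omega⟩) (W k) - g (W k)) := by
    rw [← sub_add_sub_cancel (V (k + 1)) (V k), h.direction_succ_sub (by omega)]
    abel
  rw [dist_comm, dist_eq_norm, hstep]
  refine (hsim _ _ _).trans ?_
  rw [h.norm_iterate_succ_sub hη (by omega)]
  gcongr
  exact hB k (by omega)

theorem norm_average_sub_average_le (h : IsSarahEpoch_s15 G η π W V)
    (hG : ∀ j a b, ‖G j a - G j b‖ ≤ L * ‖a - b‖) (hn : 1 ≤ n) (hη : 0 ≤ η) (hL : 0 ≤ L)
    (hηL : η * L * n ≤ 1 / 8) :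
    ‖(1 / (n : ℝ)) • ∑ i, G (π i) (W (i + 1)) - (1 / (n : ℝ)) • ∑ i, G i (W n - η • V n)‖
      ≤ ‖V 0‖ / 7 := by
  have hdrift : ∀ i : Fin n, ‖W (i + 1) - (W n - η • V n)‖ ≤ n * (η * (8 / 7 * ‖V 0‖)) :=
    fun i => h.norm_iterate_sub_output_le hη (fun j hj => h.norm_direction_le hG hη hL hηL hj)
      i.isLt
  rw [← Equiv.sum_comp π (fun i => G i _), ← smul_sub, ← sum_sub_distrib]
  refine (norm_one_div_smul_sum_le hn _ fun i =>
    (hG _ _ _).trans (mul_le_mul_of_nonneg_left (hdrift i) hL)).trans ?_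
  nlinarith [mul_le_mul_of_nonneg_right hηL (norm_nonneg (V 0))]

end IsSarahEpoch_s15

theorem le_sub_smul_of_quadratic_upper_bound {φ : E → ℝ} {x g v : E} {L η a r e : ℝ}
    (hφ : ∀ y, φ y ≤ φ x + ⟪g, y - x⟫ + L / 2 * ‖y - x‖ ^ 2) (hη : 0 ≤ η)
    (hηL : η * L ≤ 1 / 8) (hr : 0 ≤ r) (ha : 0 ≤ a) (hga : a ≤ ‖g‖ + r / 7)
    (hvr : 6 / 7 * r ≤ ‖v‖) (hve : ‖v - g‖ ≤ e + r / 14) :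
    φ (x - η • v) ≤ φ x - η / 4 * a ^ 2 - 15 / 49 * η * r ^ 2 + η * e ^ 2 := by
  have hstep := hφ (x - η • v)
  rw [sub_sub_cancel_left, inner_neg_right, real_inner_smul_right, norm_neg, norm_smul,
    Real.norm_of_nonneg hη] at hstep
  have hpolar : 2 * ⟪g, v⟫ = ‖g‖ ^ 2 + ‖v‖ ^ 2 - ‖v - g‖ ^ 2 := by
    rw [norm_sub_sq_real, real_inner_comm]; ring
  have hg : a ^ 2 ≤ 2 * ‖g‖ ^ 2 + 2 * (r / 7) ^ 2 := by
    nlinarith [sq_nonneg (‖g‖ - r / 7)]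
  have hv : (6 / 7 * r) ^ 2 ≤ ‖v‖ ^ 2 := pow_le_pow_left₀ (by positivity) hvr 2
  have he : ‖v - g‖ ^ 2 ≤ 2 * e ^ 2 + 2 * (r / 14) ^ 2 := by
    nlinarith [sq_nonneg (e - r / 14), norm_nonneg (v - g)]
  have hL : η * L * ‖v‖ ^ 2 ≤ ‖v‖ ^ 2 / 8 := by nlinarith [sq_nonneg ‖v‖]
  -- `15/49 = (7/16) (36/49) - 1/98 - 1/196`: the three perturbation costs
  have key : -(‖g‖ ^ 2 + ‖v‖ ^ 2 - ‖v - g‖ ^ 2) / 2 + η * L / 2 * ‖v‖ ^ 2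
      ≤ -a ^ 2 / 4 - 15 / 49 * r ^ 2 + e ^ 2 := by linarith
  nlinarith [mul_le_mul_of_nonneg_left key hη]

namespace IsSarahEpoch_s15

variable [CompleteSpace E] {n : ℕ} {G : Fin n → E → E} {η L δ : ℝ} {π : Equiv.Perm (Fin n)}
  {W V : ℕ → E} {φ : E → ℝ}

theorem apply_sub_smul_le (h : IsSarahEpoch_s15 G η π W V) (hφ : Differentiable ℝ φ)
    (hφL : ∀ a b, ‖gradient φ a - gradient φ b‖ ≤ L * ‖a - b‖)
    (hG : ∀ j a b, ‖G j a - G j b‖ ≤ L * ‖a - b‖)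
    (hsim : ∀ j a b, ‖(G j a - gradient φ a) - (G j b - gradient φ b)‖ ≤ δ / 2 * ‖a - b‖)
    (hn : 1 ≤ n) (hη : 0 ≤ η) (hL : 0 ≤ L) (hδ : 0 ≤ δ)
    (hηL : η * L * n ≤ 1 / 8) (hηδ : η * δ * n ≤ 1 / 8) {i : ℕ}
    (hi : i ≤ n) :
    φ (W i - η • V i) ≤ φ (W i) - η / 4 * ‖gradient φ (W 0)‖ ^ 2 - 15 / 49 * η * ‖V 0‖ ^ 2
      + η * ‖V 0 - gradient φ (W 0)‖ ^ 2 := by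
  have hin : (i : ℝ) ≤ n := by exact_mod_cast hi
  have hB : ∀ i < n, ‖V i‖ ≤ 8 / 7 * ‖V 0‖ := fun i hi =>
    h.norm_direction_le hG hη hL hηL hi.le
  have hgrad : ‖gradient φ (W 0)‖ ≤ ‖gradient φ (W i)‖ + ‖V 0‖ / 7 := by
    have hdrift := h.norm_iterate_sub_le hη hB (Nat.zero_le i) hi
    rw [Nat.cast_zero, sub_zero] at hdrift
    have hLip := hφL (W 0) (W i)
    rw [norm_sub_rev (W 0)] at hLip
    have hηLi : η * L * i ≤ 1 / 8 :=
      (mul_le_mul_of_nonneg_left hin (mul_nonneg hη hL)).trans hηL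
    nlinarith [norm_le_insert' (gradient φ (W 0)) (gradient φ (W i)),
      mul_le_mul_of_nonneg_left hdrift hL, mul_le_mul_of_nonneg_right hηLi (norm_nonneg (V 0))]
  have herr : ‖V i - gradient φ (W i)‖ ≤ ‖V 0 - gradient φ (W 0)‖ + ‖V 0‖ / 14 := by
    have hdrift := h.norm_error_sub_le (gradient φ) hsim hη hδ hB hi
    have hηδi : η * δ * i ≤ 1 / 8 :=
      (mul_le_mul_of_nonneg_left hin (mul_nonneg hη hδ)).trans hηδ
    nlinarith [norm_le_insert' (V i - gradient φ (W i)) (V 0 - gradient φ (W 0)),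
      mul_le_mul_of_nonneg_right hηδi (norm_nonneg (V 0))]
  have hηL₁ : η * L ≤ 1 / 8 :=
    (le_mul_of_one_le_right (mul_nonneg hη hL) (by exact_mod_cast hn)).trans hηL
  exact le_sub_smul_of_quadratic_upper_bound
    (quadratic_upper_bound_of_lipschitz_gradient hφ hφL (W i)) hη hηL₁ (norm_nonneg _)
    (norm_nonneg _) hgrad (h.le_norm_direction hG hη hL hηL hi) herr

theorem apply_output_le (h : IsSarahEpoch_s15 G η π W V) (hφ : Differentiable ℝ φ)
    (hφL : ∀ a b, ‖gradient φ a - gradient φ b‖ ≤ L * ‖a - b‖)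
    (hG : ∀ j a b, ‖G j a - G j b‖ ≤ L * ‖a - b‖)
    (hsim : ∀ j a b, ‖(G j a - gradient φ a) - (G j b - gradient φ b)‖ ≤ δ / 2 * ‖a - b‖)
    (hn : 1 ≤ n) (hη : 0 ≤ η) (hL : 0 ≤ L) (hδ : 0 ≤ δ)
    (hηL : η * L * n ≤ 1 / 8) (hηδ : η * δ * n ≤ 1 / 8) :
    φ (W n - η • V n) ≤ φ (W 0) - η * (n + 1) / 4 * ‖gradient φ (W 0)‖ ^ 2
      - 15 / 49 * (η * (n + 1)) * ‖V 0‖ ^ 2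
      + η * (n + 1) * ‖V 0 - gradient φ (W 0)‖ ^ 2 := by
  set D := -(η / 4 * ‖gradient φ (W 0)‖ ^ 2) - 15 / 49 * η * ‖V 0‖ ^ 2
    + η * ‖V 0 - gradient φ (W 0)‖ ^ 2 with hD
  have hstep : ∀ i ≤ n, φ (W i - η • V i) ≤ φ (W i) + D := fun i hi => by
    linarith [h.apply_sub_smul_le hφ hφL hG hsim hn hη hL hδ hηL hηδ hi]
  have hWn : φ (W n) ≤ φ (W 0) + n * D := by
    have hsum := sum_le_sum fun i (hi : i ∈ range n) =>
      sub_le_iff_le_add'.2 (h.iterate_succ (mem_range.1 hi) ▸ hstep i (mem_range.1 hi).le)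
    rw [sum_range_sub (fun i => φ (W i)), sum_const, card_range, nsmul_eq_mul] at hsum
    linarith
  calc φ (W n - η • V n) ≤ φ (W n) + D := hstep n le_rfl
    _ ≤ φ (W 0) + (n + 1) * D := by linarith
    _ = _ := by ring

end IsSarahEpoch_s15

theorem step_size_bounds {n : ℕ} (hn : 1 ≤ n) {η L δ : ℝ} (hL : 0 < L) (hδ : 0 < δ)
    (hη : η ≤ min (1 / (8 * n * L)) (1 / (8 * n ^ 2 * δ))) :
    η * L * n ≤ 1 / 8 ∧ η * δ * n ≤ 1 / 8 := by
  have hn₁ : (1 : ℝ) ≤ n := by exact_mod_cast hn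
  have hL' := (le_div_iff₀ (by positivity)).1 (hη.trans (min_le_left _ _))
  have hδ' := (le_div_iff₀ (by positivity)).1 (hη.trans (min_le_right _ _))
  constructor
  · linarith
  · nlinarith

theorem shuffled_sarah_penultimate_inequality_general
    {d n : ℕ} (hn : 1 ≤ n)
    (f : Fin n → EuclideanSpace ℝ (Fin d) → ℝ)
    (P : EuclideanSpace ℝ (Fin d) → ℝ)
    (hP : ∀ w, P w = (1 / (n : ℝ)) * ∑ i, f i w)
    (L μ δ η : ℝ) (hL : 0 < L) (hδ : 0 < δ)
    (hdiff : ∀ i, Differentiable ℝ (f i))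
    (hLip : ∀ i w₁ w₂, ‖gradient (f i) w₁ - gradient (f i) w₂‖ ≤ L * ‖w₁ - w₂‖)
    (hsc : StrongConvexOn Set.univ μ P)
    (Pstar : ℝ)
    (hsim : ∀ i w₁ w₂,
      ‖(gradient (f i) w₁ - gradient P w₁) - (gradient (f i) w₂ - gradient P w₂)‖
        ≤ (δ / 2) * ‖w₁ - w₂‖)
    (hη0 : 0 < η)
    (hη : η ≤ min (1 / (8 * n * L)) (1 / (8 * n ^ 2 * δ)))
    (π π' : Equiv.Perm (Fin n))
    (vprev : EuclideanSpace ℝ (Fin d))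
    -- first epoch: start point `wprev`, initial direction `vprev`, permutation `π`
    (W V : ℕ → EuclideanSpace ℝ (Fin d))
    (hV0 : V 0 = vprev)
    (hWrec : ∀ i : Fin n, W ((i : ℕ) + 1) = W i - η • V i)
    (hVrec : ∀ i : Fin n, V ((i : ℕ) + 1)
      = V i + gradient (f (π i)) (W ((i : ℕ) + 1)) - gradient (f (π i)) (W i))
    (wcur : EuclideanSpace ℝ (Fin d)) (hwcur : wcur = W n - η • V n)
    (vcur : EuclideanSpace ℝ (Fin d))
    (hvcur : vcur = (1 / (n : ℝ)) • ∑ i : Fin n, gradient (f (π i)) (W ((i : ℕ) + 1)))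
    -- second epoch: start point `wcur`, initial direction `vcur`, permutation `π'`
    (W' V' : ℕ → EuclideanSpace ℝ (Fin d))
    (hW'0 : W' 0 = wcur) (hV'0 : V' 0 = vcur)
    (hW'rec : ∀ i : Fin n, W' ((i : ℕ) + 1) = W' i - η • V' i)
    (hV'rec : ∀ i : Fin n, V' ((i : ℕ) + 1)
      = V' i + gradient (f (π' i)) (W' ((i : ℕ) + 1)) - gradient (f (π' i)) (W' i))
    (wnext : EuclideanSpace ℝ (Fin d)) (hwnext : wnext = W' n - η • V' n) :
    P wnext - Pstar + (η * ((n : ℝ) + 1) / 16) * ‖vcur‖ ^ 2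
      ≤ P wcur - Pstar - (η * ((n : ℝ) + 1) / 4) * ‖gradient P wcur‖ ^ 2
        + (1 - η * μ * ((n : ℝ) + 1) / 2) * (η * ((n : ℝ) + 1) / 16) * ‖vprev‖ ^ 2 := by
  have hn₁ : (1 : ℝ) ≤ n := by exact_mod_cast hn
  obtain ⟨hηL, hηδ⟩ := step_size_bounds hn hL hδ hη
  have hPgrad := hasGradientAt_of_eq_average hP hdiff
  have hPdiff : Differentiable ℝ P := fun w => (hPgrad w).differentiableAt
  have hPL := lipschitz_gradient_of_eq_average hn hP hdiff hLip
  have epoch₁ : IsSarahEpoch_s15 (fun i => gradient (f i)) η π W V := fun i => ⟨hWrec i, hVrec i⟩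
  have epoch₂ : IsSarahEpoch_s15 (fun i => gradient (f i)) η π' W' V' :=
    fun i => ⟨hW'rec i, hV'rec i⟩
  have herr : ‖vcur - gradient P wcur‖ ≤ ‖vprev‖ / 7 := by
    rw [hvcur, (hPgrad wcur).gradient, hwcur, ← hV0]
    exact epoch₁.norm_average_sub_average_le hLip hn hη0.le hL.le hηL
  have hdesc := epoch₂.apply_output_le hPdiff hPL hLip hsim hn hη0.le hL.le hδ.le hηL hηδ
  rw [hW'0, hV'0, ← hwnext] at hdesc
  have hμL := hsc.mul_sq_norm_le_of_lipschitz_gradient hPdiff hPL vprev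
  have herr2 : ‖vcur - gradient P wcur‖ ^ 2 ≤ ‖vprev‖ ^ 2 / 49 := by
    nlinarith [norm_nonneg (vcur - gradient P wcur)]
  have hμ : η * μ * (n + 1) / 2 * ‖vprev‖ ^ 2 ≤ ‖vprev‖ ^ 2 / 8 := by
    nlinarith [mul_le_mul_of_nonneg_left hμL (by positivity : (0 : ℝ) ≤ η * (n + 1)),
      mul_le_mul_of_nonneg_right hηL (sq_nonneg ‖vprev‖),
      mul_nonneg (mul_nonneg (mul_nonneg hη0.le hL.le) (sub_nonneg.2 hn₁)) (sq_nonneg ‖vprev‖)]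
  have key : ‖vcur - gradient P wcur‖ ^ 2 - 15 / 49 * ‖vcur‖ ^ 2 + ‖vcur‖ ^ 2 / 16
      ≤ (1 - η * μ * (n + 1) / 2) / 16 * ‖vprev‖ ^ 2 := by
    nlinarith [sq_nonneg ‖vcur‖]
  nlinarith [mul_le_mul_of_nonneg_left key (by positivity : (0 : ℝ) ≤ η * (n + 1))]

/-- Penultimate inequality in the proof of Theorem 1. -/
theorem shuffled_sarah_penultimate_inequality
    {d n : ℕ} (hd : 1 ≤ d) (hn : 1 ≤ n)
    (f : Fin n → EuclideanSpace ℝ (Fin d) → ℝ)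
    (P : EuclideanSpace ℝ (Fin d) → ℝ)
    (hP : ∀ w, P w = (1 / (n : ℝ)) * ∑ i, f i w)
    (L μ δ η : ℝ) (hL : 0 < L) (hμ : 0 < μ) (hδ : 0 < δ)
    (hdiff : ∀ i, Differentiable ℝ (f i))
    (hconv : ∀ i, ConvexOn ℝ Set.univ (f i))
    (hLip : ∀ i w₁ w₂, ‖gradient (f i) w₁ - gradient (f i) w₂‖ ≤ L * ‖w₁ - w₂‖)
    (hsc : StrongConvexOn Set.univ μ P)
    (wstar : EuclideanSpace ℝ (Fin d)) (hmin : IsMinOn P Set.univ wstar)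
    (Pstar : ℝ) (hPstar : Pstar = P wstar)
    (hsim : ∀ i w₁ w₂,
      ‖(gradient (f i) w₁ - gradient P w₁) - (gradient (f i) w₂ - gradient P w₂)‖
        ≤ (δ / 2) * ‖w₁ - w₂‖)
    (hη0 : 0 < η)
    (hη : η ≤ min (1 / (8 * n * L)) (1 / (8 * n ^ 2 * δ)))
    (π π' : Equiv.Perm (Fin n))
    (wprev vprev : EuclideanSpace ℝ (Fin d))
    -- first epoch: start point `wprev`, initial direction `vprev`, permutation `π`
    (W V : ℕ → EuclideanSpace ℝ (Fin d))
    (hW0 : W 0 = wprev) (hV0 : V 0 = vprev)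
    (hWrec : ∀ i : Fin n, W ((i : ℕ) + 1) = W i - η • V i)
    (hVrec : ∀ i : Fin n, V ((i : ℕ) + 1)
      = V i + gradient (f (π i)) (W ((i : ℕ) + 1)) - gradient (f (π i)) (W i))
    (wcur : EuclideanSpace ℝ (Fin d)) (hwcur : wcur = W n - η • V n)
    (vcur : EuclideanSpace ℝ (Fin d))
    (hvcur : vcur = (1 / (n : ℝ)) • ∑ i : Fin n, gradient (f (π i)) (W ((i : ℕ) + 1)))
    -- second epoch: start point `wcur`, initial direction `vcur`, permutation `π'`
    (W' V' : ℕ → EuclideanSpace ℝ (Fin d))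
    (hW'0 : W' 0 = wcur) (hV'0 : V' 0 = vcur)
    (hW'rec : ∀ i : Fin n, W' ((i : ℕ) + 1) = W' i - η • V' i)
    (hV'rec : ∀ i : Fin n, V' ((i : ℕ) + 1)
      = V' i + gradient (f (π' i)) (W' ((i : ℕ) + 1)) - gradient (f (π' i)) (W' i))
    (wnext : EuclideanSpace ℝ (Fin d)) (hwnext : wnext = W' n - η • V' n) :
    P wnext - Pstar + (η * ((n : ℝ) + 1) / 16) * ‖vcur‖ ^ 2
      ≤ P wcur - Pstar - (η * ((n : ℝ) + 1) / 4) * ‖gradient P wcur‖ ^ 2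
        + (1 - η * μ * ((n : ℝ) + 1) / 2) * (η * ((n : ℝ) + 1) / 16) * ‖vprev‖ ^ 2 :=
  shuffled_sarah_penultimate_inequality_general hn f P hP L μ δ η hL hδ hdiff hLip hsc Pstar hsim
    hη0 hη π π' vprev W V hV0 hWrec hVrec wcur hwcur vcur hvcur W' V' hW'0 hV'0 hW'rec hV'rec wnext
    hwnext
end
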